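/- If two vertices belong to the same kite of a 1-kite-planar drawing, then they have the same level. -/

import Mathlib

open Set

/-- A straight-line drawing of a graph `G` in the plane: each vertex gets a distinct
position, and each edge is drawn as the straight-line segment between its endpoints. -/
structure SLDrawing (V : Type) (G : SimpleGraph V) where
  pos : V → ℝ × ℝ
  inj : Function.Injective pos

namespace SLDrawing

variable {V : Type} {G : SimpleGraph V}

/-- The segment of the plane representing an edge. -/
noncomputable def seg (D : SLDrawing V G) : Sym2 V → Set (ℝ × ℝ) :=
  Sym2.lift ⟨fun u v => segment ℝ (D.pos u) (D.pos v),
    fun u v => segment_symm ℝ (D.pos u) (D.pos v)⟩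

/-- The set of points of the plane occupied by the drawing. -/
def drawSet (D : SLDrawing V G) : Set (ℝ × ℝ) :=
  Set.range D.pos ∪ ⋃ e ∈ G.edgeSet, D.seg e

/-- The drawing is planar (crossing-free): edges pass through a vertex point only at their
endpoints, and two distinct edges meet only in common endpoints. -/
def IsPlanar (D : SLDrawing V G) : Prop :=
  (∀ e ∈ G.edgeSet, ∀ v : V, D.pos v ∈ D.seg e → v ∈ e) ∧
    ∀ e ∈ G.edgeSet, ∀ f ∈ G.edgeSet, e ≠ f →
      ∀ p, p ∈ D.seg e → p ∈ D.seg f → ∃ v : V, v ∈ e ∧ v ∈ f ∧ p = D.pos v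

/-- A face of the drawing: a connected component of the complement of the drawing. -/
def IsFace (D : SLDrawing V G) (F : Set (ℝ × ℝ)) : Prop :=
  ∃ p, p ∉ D.drawSet ∧ F = connectedComponentIn D.drawSetᶜ p

/-- The vertices incident to (i.e. on the boundary of) a face. -/
def faceVerts (D : SLDrawing V G) (F : Set (ℝ × ℝ)) : Set V :=
  {v | D.pos v ∈ closure F}

/-- The edges on the boundary of a face. -/
def faceEdges (D : SLDrawing V G) (F : Set (ℝ × ℝ)) : Set (Sym2 V) :=
  {e | e ∈ G.edgeSet ∧ D.seg e ⊆ closure F}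

/-- Two edges cross: they share a point that is not a vertex point. -/
def Crosses (D : SLDrawing V G) (e f : Sym2 V) : Prop :=
  e ≠ f ∧ ∃ p, p ∈ D.seg e ∧ p ∈ D.seg f ∧ ∀ v : V, p ≠ D.pos v

/-- An edge is uncrossed if it crosses no edge of the graph. -/
def Uncrossed (D : SLDrawing V G) (e : Sym2 V) : Prop :=
  ∀ f ∈ G.edgeSet, ¬ D.Crosses e f

end SLDrawing

/-- A graph is 3-connected: more than 3 vertices, and removing any
fewer than 3 vertices leaves it connected. -/
def ThreeConnected {V : Type} (G : SimpleGraph V) : Prop :=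
  4 ≤ Nat.card V ∧ ∀ S : Set V, S.ncard < 3 → (G.induce Sᶜ).Connected

namespace SLDrawing

variable {V : Type} {G : SimpleGraph V}

/-- `(a, b, c, d)` form a kite of the drawing: a drawing of `K₄` whose external cell is a
quadrilateral, i.e. all six edges are present, the edges `(a,c)` and `(b,d)` cross each
other, and (property P.2 of a 1-kite-planar drawing) the four kite edges `(a,b)`, `(b,c)`,
`(c,d)`, `(d,a)` are uncrossed. -/
def IsKite (D : SLDrawing V G) (a b c d : V) : Prop :=
  s(a, b) ∈ G.edgeSet ∧ s(b, c) ∈ G.edgeSet ∧ s(c, d) ∈ G.edgeSet ∧ s(d, a) ∈ G.edgeSet ∧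
  s(a, c) ∈ G.edgeSet ∧ s(b, d) ∈ G.edgeSet ∧
  D.Crosses s(a, c) s(b, d) ∧
  D.Uncrossed s(a, b) ∧ D.Uncrossed s(b, c) ∧ D.Uncrossed s(c, d) ∧ D.Uncrossed s(d, a)

/-- A vertex is inside a kite: its position lies strictly inside the quadrilateral
bounding the kite. -/
def InsideKite (D : SLDrawing V G) (a b c d v : V) : Prop :=
  D.pos v ∈ interior (convexHull ℝ (D.pos '' ({a, b, c, d} : Set V)))

end SLDrawing

/-!
Suppose a vertex of a kite `K` lies strictly inside a kite `K'`. Walking along an uncrossed side of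
`K`, one can leave the interior of `K'` only through its boundary, which is made of the uncrossed
sides of `K'`, hence only by arriving at a vertex of `K'`. This cannot happen: the diagonals of `K`
are crossed, whereas binding edges are uncrossed (P.3), and a diagonal of `K` joining two vertices
of `K'` would be a diagonal of `K'`, whose only crossing partner is the other diagonal of `K'`
(P.1). So the vertices of `K` lie inside the same kites, and the recursive definition of levels
gives them equal levels.

Both geometric facts about a quadrilateral whose diagonals cross (its boundary is the union of its
sides, its vertices are not interior points) come from linear functionals: a supporting functional
at a boundary point is maximal at no more than one endpoint of each diagonal, and a nonzero
functional constant along one diagonal has a strict maximum or minimum at each endpoint of the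
other unless the quadrilateral is flat.
-/

section ConvexGeometry

variable {E : Type*} [NormedAddCommGroup E] [NormedSpace ℝ E]

theorem ContinuousLinearMap.notMem_interior_of_isMaxOn {f : E →L[ℝ] ℝ} (hf : f ≠ 0)
    {s : Set E} {x : E} (hmax : IsMaxOn f s x) : x ∉ interior s := fun hx =>
  hf <| f.fderiv (x := x) ▸ (hmax.isLocalMax (mem_interior_iff_mem_nhds.1 hx)).fderiv_eq_zero

theorem ContinuousLinearMap.apply_le_of_mem_convexHull (f : E →L[ℝ] ℝ) {s : Set E} {c : ℝ}
    (h : ∀ y ∈ s, f y ≤ c) {x : E} (hx : x ∈ convexHull ℝ s) : f x ≤ c :=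
  convexHull_min h (convex_halfSpace_le f.toLinearMap.isLinear c) hx

theorem ContinuousLinearMap.interior_convexHull_eq_empty_of_forall_apply_eq {f : E →L[ℝ] ℝ}
    (hf : f ≠ 0) {s : Set E} {c : ℝ} (h : ∀ y ∈ s, f y = c) :
    interior (convexHull ℝ s) = ∅ := by
  have hflat : convexHull ℝ s ⊆ {y | f y = c} :=
    convexHull_min h (convex_hyperplane f.toLinearMap.isLinear c)
  refine eq_empty_of_forall_notMem fun x hx => f.notMem_interior_of_isMaxOn hf ?_ hx
  exact isMaxOn_iff.2 fun y hy => (hflat hy).trans (hflat (interior_subset hx)).symm |>.le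

theorem Convex.exists_isMaxOn_of_notMem_interior {s : Set E} (hs : Convex ℝ s)
    (hint : (interior s).Nonempty) {q : E} (hq : q ∉ interior s) :
    ∃ f : E →L[ℝ] ℝ, f ≠ 0 ∧ IsMaxOn f s q := by
  obtain ⟨f, u, hf, hle, hge⟩ := geometric_hahn_banach_of_nonempty_interior hs
    (convex_singleton q) (disjoint_singleton_right.2 hq) hint (singleton_nonempty q)
  exact ⟨f, hf, isMaxOn_iff.2 fun y hy => (hle y hy).trans (hge q rfl)⟩

theorem exists_mem_segment_mem_frontier {s : Set E} {x y : E} (hx : x ∈ interior s)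
    (hy : y ∉ interior s) : ∃ p ∈ segment ℝ x y, p ∈ frontier s := by
  by_contra! h
  have hsub : segment ℝ x y ⊆ interior s :=
    (convex_segment x y).isPreconnected.subset_of_closure_inter_subset isOpen_interior
      ⟨x, left_mem_segment ℝ x y, hx⟩ fun p ⟨hp, hps⟩ => by
        by_contra hpi
        exact h p hps ⟨closure_mono interior_subset hp, hpi⟩
  exact hy (hsub (right_mem_segment ℝ x y))

theorem mem_convexHull_diff_singleton_of_lt {f : E →L[ℝ] ℝ} {s : Set E} {q x : E}
    (hq : q ∈ convexHull ℝ s) (hmax : ∀ y ∈ s, f y ≤ f q) (hx : f x < f q) :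
    q ∈ convexHull ℝ (s \ {x}) := by
  by_cases hxs : x ∈ s
  swap
  · rwa [sdiff_singleton_eq_self hxs]
  rcases (s \ {x}).eq_empty_or_nonempty with hempty | hne
  · rw [sdiff_eq_empty, subset_singleton_iff_eq] at hempty
    rcases hempty with rfl | rfl
    · simp at hq
    · rw [convexHull_singleton] at hq
      exact absurd hq (by rintro rfl; exact lt_irrefl _ hx)
  rw [← insert_sdiff_self_of_mem hxs, convexHull_insert hne, mem_convexJoin] at hq
  obtain ⟨x', rfl, z, hz, a, b, ha, hb, hab, rfl⟩ := hq
  have hfz : f z ≤ f (a • x' + b • z) :=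
    f.apply_le_of_mem_convexHull (fun y hy => hmax y hy.1) hz
  obtain rfl : b = 1 - a := by linarith
  have ha0 : a = 0 := by
    simp only [map_add, map_smul, smul_eq_mul] at hx hfz
    nlinarith
  simpa [ha0] using hz

theorem ContinuousLinearMap.apply_mem_openSegment (f : E →L[ℝ] ℝ) {x y z : E}
    (hz : z ∈ openSegment ℝ x y) : f z ∈ openSegment ℝ (f x) (f y) := by
  obtain ⟨a, b, ha, hb, hab, rfl⟩ := hz
  exact ⟨a, b, ha, hb, hab, by simp⟩

theorem ContinuousLinearMap.apply_eq_iff_of_mem_openSegment (f : E →L[ℝ] ℝ) {x y z : E}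
    {c : ℝ} (hz : z ∈ openSegment ℝ x y) (hx : f x ≤ c) (hy : f y ≤ c) :
    f z = c ↔ f x = c ∧ f y = c := by
  obtain ⟨a, b, ha, hb, hab, hfz⟩ := f.apply_mem_openSegment hz
  simp only [smul_eq_mul] at hfz
  obtain rfl : a = 1 - b := by linarith
  constructor
  · intro h
    constructor <;> by_contra hne
    · nlinarith [mul_pos ha (sub_pos.2 (lt_of_le_of_ne hx hne))]
    · nlinarith [mul_pos hb (sub_pos.2 (lt_of_le_of_ne hy hne))]
  · rintro ⟨hx, hy⟩
    rw [← hfz, hx, hy, ← add_mul, hab, one_mul]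

theorem frontier_convexHull_quad_subset {A B C D P : E} (hAC : P ∈ openSegment ℝ A C)
    (hBD : P ∈ openSegment ℝ B D) (hint : (interior (convexHull ℝ {A, B, C, D})).Nonempty) :
    frontier (convexHull ℝ {A, B, C, D}) ⊆
      segment ℝ A B ∪ segment ℝ B C ∪ segment ℝ C D ∪ segment ℝ D A := by
  intro q hq
  have hqQ : q ∈ convexHull ℝ {A, B, C, D} :=
    ((Set.toFinite _).isCompact_convexHull ℝ).isClosed.frontier_subset hq
  obtain ⟨f, hf, hmax⟩ := (convex_convexHull ℝ _).exists_isMaxOn_of_notMem_interior hint hq.2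
  have hle : ∀ X ∈ ({A, B, C, D} : Set E), f X ≤ f q :=
    fun X hX => hmax (subset_convexHull ℝ _ hX)
  have hfP : f P ≠ f q := by
    intro hP
    obtain ⟨hA, hC⟩ := (f.apply_eq_iff_of_mem_openSegment hAC (hle A (by simp))
      (hle C (by simp))).1 hP
    obtain ⟨hB, hD⟩ := (f.apply_eq_iff_of_mem_openSegment hBD (hle B (by simp))
      (hle D (by simp))).1 hP
    have hflat := f.interior_convexHull_eq_empty_of_forall_apply_eq hf (s := {A, B, C, D})
      (c := f q) (by simp [hA, hB, hC, hD])
    exact hint.ne_empty hflat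
  have hAC' : f A < f q ∨ f C < f q := by
    rw [Ne, f.apply_eq_iff_of_mem_openSegment hAC (hle A (by simp)) (hle C (by simp)),
      not_and_or] at hfP
    exact hfP.imp (lt_of_le_of_ne (hle A (by simp))) (lt_of_le_of_ne (hle C (by simp)))
  have hBD' : f B < f q ∨ f D < f q := by
    rw [Ne, f.apply_eq_iff_of_mem_openSegment hBD (hle B (by simp)) (hle D (by simp)),
      not_and_or] at hfP
    exact hfP.imp (lt_of_le_of_ne (hle B (by simp))) (lt_of_le_of_ne (hle D (by simp)))
  have hside : ∀ X Y Z W : E, f X < f q → f Y < f q →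
      (∀ y, (y = A ∨ y = B ∨ y = C ∨ y = D) → y ≠ X → y ≠ Y → y = Z ∨ y = W) →
      q ∈ segment ℝ Z W := fun X Y Z W hX hY hZW => by
    have hsub : (({A, B, C, D} : Set E) \ {X}) \ {Y} ⊆ {Z, W} :=
      fun y hy => hZW y hy.1.1 hy.1.2 hy.2
    rw [← convexHull_pair]
    refine convexHull_mono hsub ?_
    exact mem_convexHull_diff_singleton_of_lt
      (mem_convexHull_diff_singleton_of_lt hqQ hle hX) (fun y hy => hle y hy.1) hY
  rcases hAC' with hA | hC <;> rcases hBD' with hB | hD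
  · exact Or.inl (Or.inr (hside A B C D hA hB fun y => by tauto))
  · exact Or.inl (Or.inl (Or.inr (hside A D B C hA hD fun y => by tauto)))
  · exact Or.inr (hside C B D A hC hB fun y => by tauto)
  · exact Or.inl (Or.inl (Or.inl (hside C D A B hC hD fun y => by tauto)))

theorem notMem_interior_convexHull_quad_of_apply_eq {f : E →L[ℝ] ℝ} (hf : f ≠ 0)
    {A B C D P : E} (hAC : P ∈ openSegment ℝ A C) (hBD : P ∈ openSegment ℝ B D)
    (hfBD : f B = f D) : A ∉ interior (convexHull ℝ {A, B, C, D}) := by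
  intro hA
  have hP : ∀ g : E →L[ℝ] ℝ, g B = g D → g P = g B := fun g hg =>
    (g.apply_eq_iff_of_mem_openSegment hBD le_rfl hg.ge).2 ⟨rfl, hg.symm⟩
  have hnlt : ∀ g : E →L[ℝ] ℝ, g ≠ 0 → g B = g D → ¬ g P < g A := by
    intro g hg hgBD hlt
    obtain ⟨a, b, ha, hb, hab, hgP⟩ := g.apply_mem_openSegment hAC
    simp only [smul_eq_mul] at hgP
    obtain rfl : a = 1 - b := by linarith
    have hC : g C < g A := by nlinarith [mul_pos hb (sub_pos.2 hlt)]
    refine g.notMem_interior_of_isMaxOn hg (isMaxOn_iff.2 fun y hy => ?_) hA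
    refine g.apply_le_of_mem_convexHull (fun X hX => ?_) hy
    rcases hX with rfl | rfl | rfl | rfl <;> linarith [hP g hgBD]
  rcases lt_trichotomy (f P) (f A) with h | h | h
  · exact hnlt f hf hfBD h
  · obtain ⟨a, b, ha, hb, hab, hfP⟩ := f.apply_mem_openSegment hAC
    simp only [smul_eq_mul] at hfP
    obtain rfl : a = 1 - b := by linarith
    have hC : f C = f P := by
      have : b * (f C - f P) = 0 := by linear_combination hfP + (1 - b) * h
      exact sub_eq_zero.1 ((mul_eq_zero.1 this).resolve_left hb.ne')
    have hflat := f.interior_convexHull_eq_empty_of_forall_apply_eq hf (s := {A, B, C, D})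
      (c := f P) (by
        rintro y (rfl | rfl | rfl | rfl)
        exacts [h.symm, (hP f hfBD).symm, hC, hfBD ▸ (hP f hfBD).symm])
    simp [hflat] at hA
  · exact hnlt (-f) (neg_ne_zero.2 hf) (by simp [hfBD]) (by simpa using h)

end ConvexGeometry

theorem exists_ne_zero_apply_eq (v w : ℝ × ℝ) :
    ∃ f : ℝ × ℝ →L[ℝ] ℝ, f ≠ 0 ∧ f v = f w := by
  by_cases h : v = w
  · refine ⟨ContinuousLinearMap.fst ℝ ℝ ℝ, fun h0 => ?_, by rw [h]⟩
    simpa using congrArg (fun g : ℝ × ℝ →L[ℝ] ℝ => g (1, 0)) h0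
  set u := v - w
  refine ⟨u.2 • ContinuousLinearMap.fst ℝ ℝ ℝ -
    u.1 • ContinuousLinearMap.snd ℝ ℝ ℝ, fun h0 => h ?_, ?_⟩
  · have hu := congrArg (fun g : ℝ × ℝ →L[ℝ] ℝ => g (u.2, -u.1)) h0
    simp only [sub_apply, smul_apply, ContinuousLinearMap.coe_fst', ContinuousLinearMap.coe_snd',
      smul_eq_mul, zero_apply] at hu
    have h1 : u.1 = 0 := by nlinarith [sq_nonneg u.1, sq_nonneg u.2]
    have h2 : u.2 = 0 := by nlinarith [sq_nonneg u.1, sq_nonneg u.2]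
    exact sub_eq_zero.1 (Prod.ext h1 h2)
  · rw [← sub_eq_zero, ← map_sub]
    simp only [sub_apply, smul_apply, ContinuousLinearMap.coe_fst', ContinuousLinearMap.coe_snd',
      smul_eq_mul, Prod.fst_sub, Prod.snd_sub, u]
    ring

-- In dimension one a vertex of such a quadrilateral can be an interior point.
theorem notMem_interior_convexHull_quad {A B C D P : ℝ × ℝ} (hAC : P ∈ openSegment ℝ A C)
    (hBD : P ∈ openSegment ℝ B D) : A ∉ interior (convexHull ℝ {A, B, C, D}) :=
  let ⟨_, hf, hfBD⟩ := exists_ne_zero_apply_eq B D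
  notMem_interior_convexHull_quad_of_apply_eq hf hAC hBD hfBD

theorem Set.insert_rotate {α : Type*} (a b c d : α) : ({b, c, d, a} : Set α) = {a, b, c, d} := by
  ext x
  simp only [mem_insert_iff, mem_singleton_iff]
  tauto

namespace SLDrawing

variable {V : Type} {G : SimpleGraph V} (D : SLDrawing V G)

def EdgesAvoidVertices : Prop :=
  ∀ e ∈ G.edgeSet, ∀ v : V, D.pos v ∈ D.seg e → v ∈ e

def CrossedAtMostOnce : Prop :=
  ∀ e ∈ G.edgeSet, {f : Sym2 V | f ∈ G.edgeSet ∧ D.Crosses e f}.Subsingleton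

def BindingEdgesUncrossed : Prop :=
  ∀ a b c d : V, D.IsKite a b c d → ∀ y ∈ ({a, b, c, d} : Set V), ∀ x : V,
    D.InsideKite a b c d x → s(y, x) ∈ G.edgeSet → D.Uncrossed s(y, x)

variable {D} {a b c d : V}

@[simp]
theorem seg_mk (u v : V) : D.seg s(u, v) = segment ℝ (D.pos u) (D.pos v) := rfl

theorem Crosses.symm {e f : Sym2 V} (h : D.Crosses e f) : D.Crosses f e :=
  let ⟨hne, p, he, hf, hp⟩ := h
  ⟨hne.symm, p, hf, he, hp⟩

theorem not_crosses_loop (x : V) (g : Sym2 V) : ¬ D.Crosses s(x, x) g := by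
  rintro ⟨-, p, hp, -, hpv⟩
  simp only [seg_mk, segment_same, mem_singleton_iff] at hp
  exact hpv x hp

theorem Uncrossed.exists_common_vertex (hgood : D.EdgesAvoidVertices) {e f : Sym2 V}
    (hu : D.Uncrossed e) (he : e ∈ G.edgeSet) (hf : f ∈ G.edgeSet) (hne : e ≠ f)
    {p : ℝ × ℝ} (hpe : p ∈ D.seg e) (hpf : p ∈ D.seg f) :
    ∃ w ∈ e, w ∈ f ∧ p = D.pos w := by
  obtain ⟨w, rfl⟩ : ∃ w, p = D.pos w := by
    by_contra! hp
    exact hu f hf ⟨hne, p, hpe, hpf, hp⟩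
  exact ⟨w, hgood e he w hpe, hgood f hf w hpf, rfl⟩

theorem insideKite_iff {v : V} : D.InsideKite a b c d v ↔
    D.pos v ∈ interior (convexHull ℝ {D.pos a, D.pos b, D.pos c, D.pos d}) := by
  simp only [InsideKite, image_insert_eq, image_singleton]

theorem IsKite.rotate (hK : D.IsKite a b c d) : D.IsKite b c d a :=
  let ⟨hab, hbc, hcd, hda, hac, hbd, hcr, uab, ubc, ucd, uda⟩ := hK
  ⟨hbc, hcd, hda, hab, hbd, Sym2.eq_swap ▸ hac, Sym2.eq_swap (a := a) ▸ hcr.symm,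
    ubc, ucd, uda, uab⟩

theorem IsKite.exists_crossing (hK : D.IsKite a b c d) : ∃ P,
    P ∈ openSegment ℝ (D.pos a) (D.pos c) ∧ P ∈ openSegment ℝ (D.pos b) (D.pos d) := by
  obtain ⟨-, -, -, -, -, -, ⟨-, P, hac, hbd, hP⟩, -⟩ := hK
  rw [seg_mk] at hac hbd
  exact ⟨P, mem_openSegment_of_ne_left_right (hP a).symm (hP c).symm hac,
    mem_openSegment_of_ne_left_right (hP b).symm (hP d).symm hbd⟩

theorem IsKite.not_insideKite (hK : D.IsKite a b c d) {w : V}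
    (hw : w ∈ ({a, b, c, d} : Set V)) : ¬ D.InsideKite a b c d w := by
  obtain ⟨P, hAC, hBD⟩ := hK.exists_crossing
  have hCA := openSegment_symm ℝ (D.pos a) (D.pos c) ▸ hAC
  have hDB := openSegment_symm ℝ (D.pos b) (D.pos d) ▸ hBD
  rw [insideKite_iff]
  rcases hw with rfl | rfl | rfl | rfl
  · exact notMem_interior_convexHull_quad hAC hBD
  · rw [← Set.insert_rotate]
    exact notMem_interior_convexHull_quad hBD hCA
  · rw [← Set.insert_rotate, ← Set.insert_rotate]
    exact notMem_interior_convexHull_quad hCA hDB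
  · rw [← Set.insert_rotate, ← Set.insert_rotate, ← Set.insert_rotate]
    exact notMem_interior_convexHull_quad hDB hAC

theorem IsKite.insideKite_or_mem (hgood : D.EdgesAvoidVertices) (hK : D.IsKite a b c d)
    {u v : V} (hv : D.InsideKite a b c d v) (he : s(v, u) ∈ G.edgeSet)
    (hu : D.Uncrossed s(v, u)) : D.InsideKite a b c d u ∨ u ∈ ({a, b, c, d} : Set V) := by
  refine or_iff_not_imp_left.2 fun hu_in => ?_
  obtain ⟨P, hAC, hBD⟩ := hK.exists_crossing
  obtain ⟨p, hp, hpQ⟩ := exists_mem_segment_mem_frontier (insideKite_iff.1 hv)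
    (insideKite_iff.not.1 hu_in)
  have hside : ∀ x y, x ∈ ({a, b, c, d} : Set V) → y ∈ ({a, b, c, d} : Set V) →
      s(x, y) ∈ G.edgeSet → D.Uncrossed s(x, y) → p ∈ segment ℝ (D.pos x) (D.pos y) →
      u ∈ ({a, b, c, d} : Set V) := by
    intro x y hx hy hxy hxy_u hpxy
    have hne : s(x, y) ≠ s(v, u) := fun h => by
      rcases Sym2.mem_iff.1 (h ▸ Sym2.mem_mk_left v u : v ∈ s(x, y)) with rfl | rfl
      exacts [hK.not_insideKite hx hv, hK.not_insideKite hy hv]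
    obtain ⟨w, hw_xy, hw_vu, rfl⟩ := hxy_u.exists_common_vertex hgood hxy he hne hpxy hp
    rcases Sym2.mem_iff.1 hw_vu with rfl | rfl
    · exact absurd (insideKite_iff.1 hv) hpQ.2
    · rcases Sym2.mem_iff.1 hw_xy with rfl | rfl <;> assumption
  obtain ⟨hab, hbc, hcd, hda, -, -, -, uab, ubc, ucd, uda⟩ := hK
  rcases frontier_convexHull_quad_subset hAC hBD ⟨_, insideKite_iff.1 hv⟩ hpQ
    with ((h | h) | h) | h
  · exact hside a b (by simp) (by simp) hab uab h
  · exact hside b c (by simp) (by simp) hbc ubc h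
  · exact hside c d (by simp) (by simp) hcd ucd h
  · exact hside d a (by simp) (by simp) hda uda h

theorem IsKite.eq_diag_of_crosses (hK : D.IsKite a b c d) {x y : V}
    (hx : x ∈ ({a, b, c, d} : Set V)) (hy : y ∈ ({a, b, c, d} : Set V)) {g : Sym2 V}
    (hg : g ∈ G.edgeSet) (hcr : D.Crosses s(x, y) g) :
    s(x, y) = s(a, c) ∨ s(x, y) = s(b, d) := by
  obtain ⟨-, -, -, -, -, -, -, uab, ubc, ucd, uda⟩ := hK
  have hcr' : D.Crosses s(y, x) g := Sym2.eq_swap (a := x) ▸ hcr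
  rcases hx with rfl | rfl | rfl | rfl <;> rcases hy with rfl | rfl | rfl | rfl <;>
    first
    | exact absurd hcr (not_crosses_loop _ g)
    | exact Or.inl rfl | exact Or.inr rfl
    | exact Or.inl Sym2.eq_swap | exact Or.inr Sym2.eq_swap
    | exact (uab g hg ‹_›).elim | exact (ubc g hg ‹_›).elim
    | exact (ucd g hg ‹_›).elim | exact (uda g hg ‹_›).elim

theorem IsKite.mem_of_crosses (hP1 : D.CrossedAtMostOnce) (hK : D.IsKite a b c d) {x y : V}
    (hx : x ∈ ({a, b, c, d} : Set V)) (hy : y ∈ ({a, b, c, d} : Set V)) {g : Sym2 V}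
    (hg : g ∈ G.edgeSet) (hcr : D.Crosses s(x, y) g) {z : V} (hz : z ∈ g) :
    z ∈ ({a, b, c, d} : Set V) := by
  obtain ⟨-, -, -, -, hac, hbd, hK_cr, -⟩ := id hK
  rcases hK.eq_diag_of_crosses hx hy hg hcr with h | h <;> rw [h] at hcr
  · obtain rfl : g = s(b, d) := hP1 _ hac ⟨hg, hcr⟩ ⟨hbd, hK_cr⟩
    rcases Sym2.mem_iff.1 hz with rfl | rfl <;> simp
  · obtain rfl : g = s(a, c) := hP1 _ hbd ⟨hg, hcr⟩ ⟨hac, hK_cr.symm⟩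
    rcases Sym2.mem_iff.1 hz with rfl | rfl <;> simp

theorem IsKite.insideKite_of_insideKite_left (hgood : D.EdgesAvoidVertices)
    (hP1 : D.CrossedAtMostOnce) (hP3 : D.BindingEdgesUncrossed) (hK : D.IsKite a b c d)
    {a' b' c' d' : V} (hK' : D.IsKite a' b' c' d') (ha : D.InsideKite a' b' c' d' a) :
    ∀ y ∈ ({a, b, c, d} : Set V), D.InsideKite a' b' c' d' y := by
  obtain ⟨hab, hbc, -, hda, hac, hbd, hcr, uab, ubc, -, uda⟩ := id hK
  have hbind : ∀ {x z : V}, x ∈ ({a', b', c', d'} : Set V) → D.InsideKite a' b' c' d' z →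
      s(x, z) ∈ G.edgeSet → ¬ D.Uncrossed s(x, z) → False :=
    fun hx hz he hcrossed => hcrossed (hP3 _ _ _ _ hK' _ hx _ hz he)
  have hac_cr : ¬ D.Uncrossed s(c, a) := fun h => h _ hbd (Sym2.eq_swap (a := a) ▸ hcr)
  have hbd_cr : ¬ D.Uncrossed s(b, d) := fun h => h _ hac hcr.symm
  have hdb_cr : ¬ D.Uncrossed s(d, b) := Sym2.eq_swap (a := b) ▸ hbd_cr
  have hb := hK'.insideKite_or_mem hgood ha hab uab
  have hd := hK'.insideKite_or_mem hgood ha (Sym2.eq_swap ▸ hda) (Sym2.eq_swap ▸ uda)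
  have hb_in : D.InsideKite a' b' c' d' b := hb.resolve_right fun hbK => by
    rcases hd with hd_in | hdK
    · exact hbind hbK hd_in hbd hbd_cr
    · exact hK'.not_insideKite (hK'.mem_of_crosses hP1 hbK hdK hac hcr.symm
        (Sym2.mem_mk_left a c)) ha
  have hd_in : D.InsideKite a' b' c' d' d := hd.resolve_right fun hdK =>
    hbind hdK hb_in (Sym2.eq_swap ▸ hbd) hdb_cr
  have hc_in : D.InsideKite a' b' c' d' c :=
    (hK'.insideKite_or_mem hgood hb_in hbc ubc).resolve_right fun hcK =>
      hbind hcK ha (Sym2.eq_swap ▸ hac) hac_cr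
  rintro y (rfl | rfl | rfl | rfl) <;> assumption

theorem IsKite.insideKite_of_insideKite (hgood : D.EdgesAvoidVertices)
    (hP1 : D.CrossedAtMostOnce) (hP3 : D.BindingEdgesUncrossed) (hK : D.IsKite a b c d)
    {a' b' c' d' : V} (hK' : D.IsKite a' b' c' d') {x : V} (hx : x ∈ ({a, b, c, d} : Set V))
    (hx_in : D.InsideKite a' b' c' d' x) :
    ∀ y ∈ ({a, b, c, d} : Set V), D.InsideKite a' b' c' d' y := by
  rcases hx with rfl | rfl | rfl | rfl
  · exact hK.insideKite_of_insideKite_left hgood hP1 hP3 hK' hx_in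
  · rw [← Set.insert_rotate]
    exact hK.rotate.insideKite_of_insideKite_left hgood hP1 hP3 hK' hx_in
  · rw [← Set.insert_rotate, ← Set.insert_rotate]
    exact hK.rotate.rotate.insideKite_of_insideKite_left hgood hP1 hP3 hK' hx_in
  · rw [← Set.insert_rotate, ← Set.insert_rotate, ← Set.insert_rotate]
    exact hK.rotate.rotate.rotate.insideKite_of_insideKite_left hgood hP1 hP3 hK' hx_in

end SLDrawing

theorem kite_vertices_same_level_general {V : Type}
    (G : SimpleGraph V) (D : SLDrawing V G)
    (hgood : ∀ e ∈ G.edgeSet, ∀ v : V, D.pos v ∈ D.seg e → v ∈ e)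
    -- P.1: every edge is crossed at most once
    (hP1 : ∀ e ∈ G.edgeSet, {f : Sym2 V | f ∈ G.edgeSet ∧ D.Crosses e f}.Subsingleton)
    -- P.3: every binding edge is uncrossed
    (hP3 : ∀ a b c d : V, D.IsKite a b c d → ∀ y ∈ ({a, b, c, d} : Set V), ∀ x : V,
      D.InsideKite a b c d x → s(y, x) ∈ G.edgeSet → D.Uncrossed s(y, x))
    -- the level function
    (lvl : V → ℕ)
    (hlvl0 : ∀ v : V, (¬ ∃ a b c d : V, D.IsKite a b c d ∧ D.InsideKite a b c d v) →
      lvl v = 0)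
    (hlvl_lt : ∀ (v a b c d : V), D.IsKite a b c d → D.InsideKite a b c d v →
      ∀ w ∈ ({a, b, c, d} : Set V), lvl w < lvl v)
    (hlvl_max : ∀ v : V, (∃ a b c d : V, D.IsKite a b c d ∧ D.InsideKite a b c d v) →
      ∃ a b c d : V, D.IsKite a b c d ∧ D.InsideKite a b c d v ∧
        ∃ w ∈ ({a, b, c, d} : Set V), lvl v = lvl w + 1) :
    ∀ a b c d : V, D.IsKite a b c d →
      ∀ x ∈ ({a, b, c, d} : Set V), ∀ y ∈ ({a, b, c, d} : Set V), lvl x = lvl y := by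
  intro a b c d hK
  have hle : ∀ x ∈ ({a, b, c, d} : Set V), ∀ y ∈ ({a, b, c, d} : Set V),
      lvl y ≤ lvl x := by
    intro x hx y hy
    by_contra! hlt
    have hy_in : ∃ a' b' c' d', D.IsKite a' b' c' d' ∧ D.InsideKite a' b' c' d' y := by
      by_contra h
      have := hlvl0 y h
      omega
    obtain ⟨a', b', c', d', hK', hy', w, hw, hyw⟩ := hlvl_max y hy_in
    have hx' := hK.insideKite_of_insideKite hgood hP1 hP3 hK' hy hy' x hx
    have := hlvl_lt x a' b' c' d' hK' hx' w hw
    omega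
  exact fun x hx y hy => le_antisymm (hle y hy x hx) (hle x hx y hy)

/-- If two vertices belong to the same kite of a 1-kite-planar drawing, then they are of the
same level.  Here `lvl` is the level function of the drawing: `lvl v = 0` if no kite
contains `v`, and `lvl v = i > 0` if the maximum level of the vertices belonging to a kite
containing `v` is `i - 1`; the drawing is 1-kite-planar: every edge is crossed at most once
(P.1), kite edges are uncrossed (P.2, built into `IsKite`), and every binding edge is
uncrossed (P.3). -/
theorem kite_vertices_same_level {V : Type} [Fintype V]
    (G : SimpleGraph V) (D : SLDrawing V G)
    (hgood : ∀ e ∈ G.edgeSet, ∀ v : V, D.pos v ∈ D.seg e → v ∈ e)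
    -- P.1: every edge is crossed at most once
    (hP1 : ∀ e ∈ G.edgeSet, {f : Sym2 V | f ∈ G.edgeSet ∧ D.Crosses e f}.Subsingleton)
    -- P.3: every binding edge is uncrossed
    (hP3 : ∀ a b c d : V, D.IsKite a b c d → ∀ y ∈ ({a, b, c, d} : Set V), ∀ x : V,
      D.InsideKite a b c d x → s(y, x) ∈ G.edgeSet → D.Uncrossed s(y, x))
    -- the level function
    (lvl : V → ℕ)
    (hlvl0 : ∀ v : V, (¬ ∃ a b c d : V, D.IsKite a b c d ∧ D.InsideKite a b c d v) →
      lvl v = 0)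
    (hlvl_lt : ∀ (v a b c d : V), D.IsKite a b c d → D.InsideKite a b c d v →
      ∀ w ∈ ({a, b, c, d} : Set V), lvl w < lvl v)
    (hlvl_max : ∀ v : V, (∃ a b c d : V, D.IsKite a b c d ∧ D.InsideKite a b c d v) →
      ∃ a b c d : V, D.IsKite a b c d ∧ D.InsideKite a b c d v ∧
        ∃ w ∈ ({a, b, c, d} : Set V), lvl v = lvl w + 1) :
    ∀ a b c d : V, D.IsKite a b c d →
      ∀ x ∈ ({a, b, c, d} : Set V), ∀ y ∈ ({a, b, c, d} : Set V), lvl x = lvl y :=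
  kite_vertices_same_level_general G D hgood hP1 hP3 lvl hlvl0 hlvl_lt hlvl_max
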